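/- arXiv:1810.13372 — 3 statements merged into one kernel-verified Lean document; each statement's English description precedes it below -/
import Mathlib

section
/- (Pólya's theorem, Proposition 3.2.) Let h ∈ ℝ[x₁,…,x_n] be homogeneous of degree d and suppose h(u) > 0 for every u in the simplex Δ_n. Then there exists N ∈ ℕ such that for every integer r ≥ N the polynomial (x₁+…+x_n)^r · h(x) has all positive coefficients; that is, for every multi-index κ ∈ ℕⁿ with |κ| = d + r, the coefficient of x^κ in (x₁+…+x_n)^r · h(x) is strictly positive. -/
/-!
Write `h = ∑ c_α x^α` with `|α| = d` for every `α`, and put `s = d + r`. Comparing coefficients,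
`κ! · [x^κ] (x₁ + ⋯ + x_n)^r h = r! ∑ c_α ∏ᵢ κᵢ(κᵢ - 1)⋯(κᵢ - αᵢ + 1) = r! s^d h_{1/s}(κ/s)`,
where `h_t(u)` is obtained from `h` by replacing each `x^α` with the falling product
`∏ᵢ uᵢ(uᵢ - t)⋯(uᵢ - (αᵢ - 1)t)`. Now `h_t(u)` is jointly continuous in `(t, u)` and `h_0 = h` is
positive on the compact simplex, so `h_t > 0` on the simplex for small `t`; since `κ/s` lies in the
simplex, the coefficient is positive as soon as `1/s` is small.
-/

open MvPolynomial Finset Filter Topology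
open scoped Nat

theorem Nat.cast_descFactorial_eq_prod_range {R : Type*} [CommRing R] (m k : ℕ) :
    (m.descFactorial k : R) = ∏ j ∈ range k, ((m : R) - j) := by
  rw [← descPochhammer_eval_eq_descFactorial, descPochhammer_eval_eq_prod_range]

theorem pow_mul_prod_range_div_sub {K : Type*} [Field K] {c : K} (hc : c ≠ 0) (m : K) (k : ℕ) :
    c ^ k * ∏ j ∈ range k, (m / c - j * c⁻¹) = ∏ j ∈ range k, (m - j) :=
  calc c ^ k * ∏ j ∈ range k, (m / c - j * c⁻¹) = ∏ j ∈ range k, c * (m / c - j * c⁻¹) := by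
        rw [← pow_card_mul_prod, card_range]
    _ = ∏ j ∈ range k, (m - j) := Finset.prod_congr rfl fun j _ => by field_simp

theorem Finsupp.multinomial_tsub_mul_prod_factorial {σ : Type*} [Fintype σ] {α κ : σ →₀ ℕ}
    (hακ : α ≤ κ) :
    (κ - α).multinomial * ∏ i, (κ i)! = (κ - α).degree ! * ∏ i, (κ i).descFactorial (α i) := by
  have hfact : ∏ i, (κ i)! = (∏ i, ((κ - α) i)!) * ∏ i, (κ i).descFactorial (α i) := by
    rw [← prod_mul_distrib]
    exact Finset.prod_congr rfl fun i _ => by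
      rw [Finsupp.tsub_apply, Nat.factorial_mul_descFactorial (hακ i)]
  rw [hfact, ← mul_assoc, mul_comm _ (∏ i, _ !),
    Finsupp.multinomial_eq_of_support_subset (subset_univ _), Nat.multinomial_spec,
    Finsupp.degree_eq_sum]

theorem Finsupp.div_natCast_mem_stdSimplex {σ : Type*} [Fintype σ] {κ : σ →₀ ℕ} {s : ℕ}
    (hκ : κ.degree = s) (hs : s ≠ 0) : (fun i => (κ i : ℝ) / s) ∈ stdSimplex ℝ σ := by
  refine ⟨fun i => by positivity, ?_⟩
  rw [← sum_div, ← Nat.cast_sum, ← Finsupp.degree_eq_sum, hκ, div_self (by exact_mod_cast hs)]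

namespace MvPolynomial

variable {σ R : Type*}

theorem IsHomogeneous.degree_eq_of_mem_support [CommSemiring R] {p : MvPolynomial σ R} {d : ℕ}
    (hp : p.IsHomogeneous d) {α : σ →₀ ℕ} (hα : α ∈ p.support) : α.degree = d := by
  by_contra h
  exact mem_support_iff.1 hα (hp.coeff_eq_zero h)

variable [Fintype σ]

section CommSemiring

variable [CommSemiring R]

theorem coeff_sum_X_pow_mul_monomial_mul_prod_factorial {r : ℕ} {α κ : σ →₀ ℕ}
    (hdeg : α.degree + r = κ.degree) (c : R) :
    ((∑ i, X i) ^ r * monomial α c).coeff κ * ∏ i, ((κ i)! : R) =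
      c * r ! * ∏ i, ((κ i).descFactorial (α i) : R) := by
  classical
  rw [coeff_mul_monomial']
  split_ifs with hακ
  · have hr : (κ - α).degree = r := by
      have := map_add Finsupp.degree α (κ - α)
      rw [add_tsub_cancel_of_le hακ] at this
      omega
    rw [coeff_sum_X_pow_of_fintype, if_pos (show (κ - α).sum (fun _ m => m) = r from hr)]
    have := congrArg (Nat.cast : ℕ → R) (Finsupp.multinomial_tsub_mul_prod_factorial hακ)
    push_cast [hr] at this
    rw [mul_right_comm, this]
    ring
  · obtain ⟨i, hi⟩ : ∃ i, κ i < α i := by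
      simpa [Finsupp.le_def] using hακ
    rw [zero_mul, prod_eq_zero (mem_univ i)
      (by rw [Nat.descFactorial_eq_zero_iff_lt.2 hi, Nat.cast_zero]), mul_zero]

theorem coeff_sum_X_pow_mul_mul_prod_factorial {p : MvPolynomial σ R} {d r : ℕ}
    (hp : p.IsHomogeneous d) {κ : σ →₀ ℕ} (hκ : κ.degree = d + r) :
    ((∑ i, X i) ^ r * p).coeff κ * ∏ i, ((κ i)! : R) =
      r ! * ∑ α ∈ p.support, p.coeff α * ∏ i, ((κ i).descFactorial (α i) : R) := by
  conv_lhs => rw [p.as_sum, mul_sum, coeff_sum, sum_mul]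
  rw [mul_sum]
  refine sum_congr rfl fun α hα => ?_
  have := hp.degree_eq_of_mem_support hα
  rw [coeff_sum_X_pow_mul_monomial_mul_prod_factorial (by omega)]
  ring

end CommSemiring

section CommRing

variable [CommRing R]

def fallingEval (t : R) (u : σ → R) (p : MvPolynomial σ R) : R :=
  ∑ α ∈ p.support, p.coeff α * ∏ i, ∏ j ∈ range (α i), (u i - j * t)

theorem fallingEval_zero (u : σ → R) (p : MvPolynomial σ R) :
    fallingEval 0 u p = eval u p := by
  simp [fallingEval, eval_eq']

theorem continuous_fallingEval [TopologicalSpace R] [IsTopologicalRing R]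
    (p : MvPolynomial σ R) : Continuous fun q : R × (σ → R) => fallingEval q.1 q.2 p := by
  unfold fallingEval
  fun_prop

end CommRing

theorem pow_mul_fallingEval_inv {K : Type*} [Field K] {p : MvPolynomial σ K} {d : ℕ}
    (hp : p.IsHomogeneous d) (κ : σ →₀ ℕ) {s : K} (hs : s ≠ 0) :
    s ^ d * fallingEval s⁻¹ (fun i => κ i / s) p =
      ∑ α ∈ p.support, p.coeff α * ∏ i, ((κ i).descFactorial (α i) : K) := by
  rw [fallingEval, mul_sum]
  refine sum_congr rfl fun α hα => ?_
  rw [← hp.degree_eq_of_mem_support hα, Finsupp.degree_eq_sum, ← prod_pow_eq_pow_sum,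
    mul_left_comm, ← prod_mul_distrib]
  simp only [pow_mul_prod_range_div_sub hs, Nat.cast_descFactorial_eq_prod_range]

theorem eventually_forall_stdSimplex_fallingEval_pos {p : MvPolynomial σ ℝ}
    (hp : ∀ u ∈ stdSimplex ℝ σ, 0 < eval u p) :
    ∀ᶠ t in 𝓝 0, ∀ u ∈ stdSimplex ℝ σ, 0 < fallingEval t u p :=
  (isCompact_stdSimplex ℝ σ).eventually_forall_of_forall_eventually fun u hu =>
    continuousAt_const.eventually_lt (continuous_fallingEval p).continuousAt
      (by simpa [fallingEval_zero] using hp u hu)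

end MvPolynomial

theorem polya_positive_coefficients_general (n d : ℕ)
    (h : MvPolynomial (Fin n) ℝ) (hhom : h.IsHomogeneous d)
    (hpos : ∀ u : Fin n → ℝ, (∀ j, 0 ≤ u j) → (∑ j, u j) = 1 → 0 < eval u h) :
    ∃ N : ℕ, ∀ r : ℕ, N ≤ r → ∀ κ : Fin n →₀ ℕ, (∑ j, κ j) = d + r →
      0 < ((∑ j, (X j : MvPolynomial (Fin n) ℝ)) ^ r * h).coeff κ := by
  have hevent : ∀ᶠ s : ℕ in atTop, s ≠ 0 ∧
      ∀ u ∈ stdSimplex ℝ (Fin n), 0 < fallingEval (s : ℝ)⁻¹ u h :=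
    (eventually_ne_atTop 0).and <|
      (tendsto_inv_atTop_zero.comp tendsto_natCast_atTop_atTop).eventually
        (eventually_forall_stdSimplex_fallingEval_pos fun u hu => hpos u hu.1 hu.2)
  obtain ⟨N, hN⟩ := eventually_atTop.1 hevent
  refine ⟨N, fun r hr κ hκ => ?_⟩
  obtain ⟨hs, hfalling⟩ := hN (d + r) (by omega)
  rw [← Finsupp.degree_eq_sum] at hκ
  have hu := hfalling _ (Finsupp.div_natCast_mem_stdSimplex hκ hs)
  have hcoeff := coeff_sum_X_pow_mul_mul_prod_factorial (R := ℝ) hhom hκ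
  rw [← pow_mul_fallingEval_inv hhom κ (Nat.cast_ne_zero.2 hs)] at hcoeff
  refine pos_of_mul_pos_left ?_ (by positivity : (0 : ℝ) ≤ ∏ i, ((κ i)! : ℝ))
  rw [hcoeff]
  positivity

/-- **Pólya's theorem.** If `h` is a homogeneous polynomial of degree `d` in `n` variables
that is strictly positive on the standard simplex `Δ_n`, then there is `N` such that for all
`r ≥ N` the polynomial `(x₁ + ⋯ + x_n)^r * h` has all coefficients strictly positive (on
multi-indices of total degree `d + r`). -/
theorem polya_positive_coefficients (n d : ℕ) (hn : 1 ≤ n)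
    (h : MvPolynomial (Fin n) ℝ) (hhom : h.IsHomogeneous d)
    (hpos : ∀ u : Fin n → ℝ, (∀ j, 0 ≤ u j) → (∑ j, u j) = 1 → 0 < eval u h) :
    ∃ N : ℕ, ∀ r : ℕ, N ≤ r → ∀ κ : Fin n →₀ ℕ, (∑ j, κ j) = d + r →
      0 < ((∑ j, (X j : MvPolynomial (Fin n) ℝ)) ^ r * h).coeff κ :=
  polya_positive_coefficients_general n d h hhom hpos
end

section
/- (Strict primal feasibility, Lemma 3.6.) Let τ = (τ₁,…,τ_p) ∈ ℕᵖ. There exists y : Λ_{2τ} → ℝ such that: (i) Σ_{α∈Λ_{2τ}} g_α y_α = 1, where (g_α) are the coefficients of g(x) := ∏_{i=1}^p (Σ_{j=1}^{n_i} (x⁽ⁱ⁾_j)²)^{τ_i}; (ii) the moment matrix M(y) is positive definite; and (iii) M(y) is entrywise strictly positive. That is, the DNN relaxation is strictly feasible. -/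
open MvPolynomial Finset

/-- Grouped multi-indices of multidegree `τ`. -/
def Lam {p : ℕ} (n τ : Fin p → ℕ) : Type :=
  {β : ∀ i : Fin p, Fin (n i) → ℕ // ∀ i, ∑ j, β i j = τ i}

theorem Lam.entry_le {p : ℕ} {n τ : Fin p → ℕ} (β : Lam n τ) (i : Fin p) (j : Fin (n i)) :
    β.1 i j < τ i + 1 := by
  refine Nat.lt_succ_of_le ?_
  have h := Finset.single_le_sum (f := fun j' => β.1 i j') (fun _ _ => Nat.zero_le _)
    (Finset.mem_univ j)
  exact h.trans (le_of_eq (β.2 i))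

noncomputable instance {p : ℕ} (n τ : Fin p → ℕ) : Fintype (Lam n τ) :=
  Fintype.ofInjective
    (fun β : Lam n τ =>
      (fun i j => (⟨β.1 i j, β.entry_le i j⟩ : Fin (τ i + 1)) :
        ∀ i : Fin p, Fin (n i) → Fin (τ i + 1)))
    (by
      intro β γ h
      apply Subtype.ext
      funext i j
      exact congrArg Fin.val (congrFun (congrFun h i) j))

/-- Sum of two grouped multi-indices of the same multidegree `τ`, of multidegree `2τ`. -/
def Lam.add2 {p : ℕ} {n τ : Fin p → ℕ} (β γ : Lam n τ) : Lam n (fun i => 2 * τ i) :=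
  ⟨fun i j => β.1 i j + γ.1 i j, fun i => by
    rw [Finset.sum_add_distrib, β.2 i, γ.2 i]; ring⟩

/-- The value of the monomial `x^β`. -/
noncomputable def Lam.mono {p : ℕ} {n τ : Fin p → ℕ} (β : Lam n τ)
    (x : ∀ i : Fin p, Fin (n i) → ℝ) : ℝ :=
  ∏ i, ∏ j, x i j ^ β.1 i j

/-- The exponent Finsupp corresponding to a grouped multi-index. -/
noncomputable def Lam.toFinsupp {p : ℕ} {n τ : Fin p → ℕ} (β : Lam n τ) :
    (Σ i : Fin p, Fin (n i)) →₀ ℕ :=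
  Finsupp.equivFunOnFinite.symm (fun q => β.1 q.1 q.2)

/-- `f` is a multi-form of multidegree `d`. -/
def IsMultiForm {p : ℕ} {n : Fin p → ℕ} (f : MvPolynomial (Σ i : Fin p, Fin (n i)) ℝ)
    (d : Fin p → ℕ) : Prop :=
  ∀ m ∈ f.support, ∀ i : Fin p, ∑ j, m ⟨i, j⟩ = d i

/-- Evaluation of a polynomial at a grouped point. -/
noncomputable def evalAt {p : ℕ} {n : Fin p → ℕ} (x : ∀ i : Fin p, Fin (n i) → ℝ)
    (f : MvPolynomial (Σ i : Fin p, Fin (n i)) ℝ) : ℝ :=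
  MvPolynomial.eval (fun q : Σ i : Fin p, Fin (n i) => x q.1 q.2) f

/-- The nonnegative multi-sphere. -/
def NonnegSphere {p : ℕ} {n : Fin p → ℕ} (x : ∀ i : Fin p, Fin (n i) → ℝ) : Prop :=
  ∀ i, (∀ j, 0 ≤ x i j) ∧ ∑ j, (x i j) ^ 2 = 1

/-- The multi-form `g(x) = ∏ i (∑ j (x⁽ⁱ⁾ⱼ)²)^{τ i}`. -/
noncomputable def gPoly {p : ℕ} (n τ : Fin p → ℕ) :
    MvPolynomial (Σ i : Fin p, Fin (n i)) ℝ :=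
  ∏ i, (∑ j, (X (⟨i, j⟩ : Σ i : Fin p, Fin (n i)) : MvPolynomial (Σ i : Fin p, Fin (n i)) ℝ) ^ 2) ^ τ i

/-- The moment matrix of `y : Λ_{2τ} → ℝ`. -/
def momentMatrix {p : ℕ} {n τ : Fin p → ℕ} (y : Lam n (fun i => 2 * τ i) → ℝ) :
    Matrix (Lam n τ) (Lam n τ) ℝ :=
  Matrix.of fun β γ => y (β.add2 γ)

/-!
Take `y` to be the moment vector of the counting measure on a finite grid of points with positive
coordinates, rescaled so that `∑ g_α y_α = 1`; this is possible since `g > 0` at such points, and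
all entries of `M(y)` are then positive. Moreover `M(y) = Vᵀ V`, where `V` evaluates the monomials
of `Λ_τ` at the grid points, and `V` is injective: a polynomial of degree at most `τ_i` in each
variable of group `i` that vanishes on a grid with `τ_i + 1` values per coordinate is zero
(combinatorial Nullstellensatz).
-/

open scoped Matrix

section

variable {p : ℕ} {n τ : Fin p → ℕ}

namespace Lam

theorem toFinsupp_injective : Function.Injective (toFinsupp : Lam n τ → _) := by
  intro β γ h
  apply Subtype.ext
  funext i j
  exact DFunLike.congr_fun h ⟨i, j⟩

theorem mono_add2 (β γ : Lam n τ) (x : ∀ i : Fin p, Fin (n i) → ℝ) :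
    (β.add2 γ).mono x = β.mono x * γ.mono x := by
  simp only [mono, add2, pow_add, Finset.prod_mul_distrib]

theorem mono_eq_prod (β : Lam n τ) (x : ∀ i : Fin p, Fin (n i) → ℝ) :
    β.mono x = ∏ q : Σ i : Fin p, Fin (n i), x q.1 q.2 ^ β.toFinsupp q := by
  rw [← Finset.univ_sigma_univ, Finset.prod_sigma]
  rfl

theorem mono_pos (β : Lam n τ) {x : ∀ i : Fin p, Fin (n i) → ℝ} (hx : ∀ i j, 0 < x i j) :
    0 < β.mono x :=
  Finset.prod_pos fun i _ => Finset.prod_pos fun j _ => pow_pos (hx i j) _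

noncomputable def sumMonomial (c : Lam n τ → ℝ) : MvPolynomial (Σ i : Fin p, Fin (n i)) ℝ :=
  ∑ β, monomial β.toFinsupp (c β)

theorem coeff_sumMonomial (c : Lam n τ → ℝ) (β : Lam n τ) :
    (sumMonomial c).coeff β.toFinsupp = c β := by
  classical
  rw [sumMonomial, coeff_sum, Finset.sum_eq_single β]
  · rw [coeff_monomial, if_pos rfl]
  · intro γ _ hγ
    rw [coeff_monomial, if_neg (toFinsupp_injective.ne hγ)]
  · simp

theorem evalAt_sumMonomial (c : Lam n τ → ℝ) (x : ∀ i : Fin p, Fin (n i) → ℝ) :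
    evalAt x (sumMonomial c) = ∑ β, c β * β.mono x := by
  simp only [evalAt, sumMonomial, map_sum, eval_monomial, mono_eq_prod,
    Finsupp.prod_fintype _ _ fun _ => pow_zero _]

theorem degreeOf_sumMonomial_lt (c : Lam n τ → ℝ) (q : Σ i : Fin p, Fin (n i)) :
    (sumMonomial c).degreeOf q < τ q.1 + 1 := by
  classical
  refine (degreeOf_lt_iff (Nat.succ_pos _)).2 fun m hm => ?_
  obtain ⟨β, -, hβ⟩ := Finset.exists_ne_zero_of_sum_ne_zero
    (by simpa only [sumMonomial, coeff_sum] using mem_support_iff.1 hm)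
  rw [coeff_monomial] at hβ
  obtain rfl : β.toFinsupp = m := by by_contra h; exact hβ (if_neg h)
  exact β.entry_le q.1 q.2

end Lam

theorem sum_coeff_mul_mono_eq_evalAt {d : Fin p → ℕ}
    {f : MvPolynomial (Σ i : Fin p, Fin (n i)) ℝ} (hf : IsMultiForm f d)
    (x : ∀ i : Fin p, Fin (n i) → ℝ) :
    ∑ α : Lam n d, f.coeff α.toFinsupp * α.mono x = evalAt x f := by
  classical
  have hsupp : f.support ⊆ Finset.univ.image (Lam.toFinsupp : Lam n d → _) := fun m hm =>
    Finset.mem_image.2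
      ⟨⟨fun i j => m ⟨i, j⟩, hf m hm⟩, Finset.mem_univ _, Finsupp.ext fun _ => rfl⟩
  calc ∑ α : Lam n d, f.coeff α.toFinsupp * α.mono x
      = ∑ m ∈ Finset.univ.image (Lam.toFinsupp : Lam n d → _),
          f.coeff m * ∏ q, x q.1 q.2 ^ m q := by
        rw [Finset.sum_image fun _ _ _ _ h => Lam.toFinsupp_injective h]
        simp only [Lam.mono_eq_prod]
    _ = ∑ m ∈ f.support, f.coeff m * ∏ q, x q.1 q.2 ^ m q := by
        refine (Finset.sum_subset hsupp fun m _ hm => ?_).symm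
        rw [notMem_support_iff.1 hm, zero_mul]
    _ = evalAt x f := (eval_eq' _ f).symm

def groupWeight (i : Fin p) : (Σ i : Fin p, Fin (n i)) → ℕ := fun q => if q.1 = i then 1 else 0

theorem weight_groupWeight (i : Fin p) (m : (Σ i : Fin p, Fin (n i)) →₀ ℕ) :
    Finsupp.weight (groupWeight i) m = ∑ j, m ⟨i, j⟩ := by
  rw [Finsupp.weight_apply, Finsupp.sum_fintype _ _ fun _ => by simp,
    ← Finset.univ_sigma_univ, Finset.sum_sigma, Finset.sum_eq_single i]
  · simp [groupWeight]
  · intro i' _ hi'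
    simp [groupWeight, hi']
  · simp

theorem isMultiForm_of_isWeightedHomogeneous {f : MvPolynomial (Σ i : Fin p, Fin (n i)) ℝ}
    {d : Fin p → ℕ} (hf : ∀ i, f.IsWeightedHomogeneous (groupWeight i) (d i)) :
    IsMultiForm f d := fun m hm i =>
  (weight_groupWeight i m).symm.trans (hf i (mem_support_iff.1 hm))

theorem gPoly_isMultiForm : IsMultiForm (gPoly n τ) (fun i => 2 * τ i) := by
  refine isMultiForm_of_isWeightedHomogeneous fun i => ?_
  have hfactor (i' : Fin p) : (∑ j, (X ⟨i', j⟩ : MvPolynomial (Σ i : Fin p, Fin (n i)) ℝ) ^ 2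
      ).IsWeightedHomogeneous (groupWeight i) (2 • if i' = i then 1 else 0) :=
    IsWeightedHomogeneous.sum _ _ _ fun j _ => (isWeightedHomogeneous_X ℝ _ _).pow 2
  rw [gPoly]
  convert IsWeightedHomogeneous.prod Finset.univ _ _ fun i' _ => (hfactor i').pow (τ i') using 1
  simp [mul_comm]

theorem evalAt_gPoly (x : ∀ i : Fin p, Fin (n i) → ℝ) :
    evalAt x (gPoly n τ) = ∏ i, (∑ j, x i j ^ 2) ^ τ i := by
  simp only [evalAt, gPoly, map_prod, map_pow, map_sum, eval_X]

theorem evalAt_gPoly_pos (hn : ∀ i, 1 ≤ n i) {x : ∀ i : Fin p, Fin (n i) → ℝ}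
    (hx : ∀ i j, 0 < x i j) : 0 < evalAt x (gPoly n τ) := by
  rw [evalAt_gPoly]
  refine Finset.prod_pos fun i _ => pow_pos ?_ _
  exact Finset.sum_pos (fun j _ => pow_pos (hx i j) 2) (Finset.univ_nonempty_iff.2 ⟨⟨0, hn i⟩⟩)

theorem momentMatrix_smul (r : ℝ) (y : Lam n (fun i => 2 * τ i) → ℝ) :
    momentMatrix (r • y) = r • momentMatrix y :=
  rfl

section PointMoments

variable {ι : Type*} [Fintype ι]

/-- The moments of the counting measure on the points `x k`. -/
noncomputable def pointMoments (x : ι → ∀ i : Fin p, Fin (n i) → ℝ) (α : Lam n τ) : ℝ :=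
  ∑ k, α.mono (x k)

noncomputable def monoEvalMatrix (x : ι → ∀ i : Fin p, Fin (n i) → ℝ) :
    Matrix ι (Lam n τ) ℝ :=
  Matrix.of fun k β => β.mono (x k)

theorem momentMatrix_pointMoments (x : ι → ∀ i : Fin p, Fin (n i) → ℝ) :
    momentMatrix (pointMoments x) = (monoEvalMatrix x)ᵀ * monoEvalMatrix (τ := τ) x := by
  ext β γ
  simp [momentMatrix, pointMoments, monoEvalMatrix, Matrix.mul_apply, Lam.mono_add2]

theorem posDef_momentMatrix_pointMoments {x : ι → ∀ i : Fin p, Fin (n i) → ℝ}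
    (hx : Function.Injective (monoEvalMatrix (τ := τ) x).mulVec) :
    (momentMatrix (τ := τ) (pointMoments x)).PosDef := by
  rw [momentMatrix_pointMoments, ← Matrix.conjTranspose_eq_transpose_of_trivial]
  exact .conjTranspose_mul_self _ hx

theorem pointMoments_pos [Nonempty ι] {x : ι → ∀ i : Fin p, Fin (n i) → ℝ}
    (hx : ∀ k i j, 0 < x k i j) (α : Lam n τ) : 0 < pointMoments x α :=
  Finset.sum_pos (fun k _ => α.mono_pos (hx k)) Finset.univ_nonempty

theorem sum_coeff_mul_pointMoments {d : Fin p → ℕ}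
    {f : MvPolynomial (Σ i : Fin p, Fin (n i)) ℝ} (hf : IsMultiForm f d)
    (x : ι → ∀ i : Fin p, Fin (n i) → ℝ) :
    ∑ α : Lam n d, f.coeff α.toFinsupp * pointMoments x α = ∑ k, evalAt (x k) f := by
  simp only [pointMoments, Finset.mul_sum]
  rw [Finset.sum_comm]
  exact Finset.sum_congr rfl fun k _ => sum_coeff_mul_mono_eq_evalAt hf (x k)

end PointMoments

def gridPoint (k : ∀ i, Fin (n i) → Fin (τ i + 1)) : ∀ i, Fin (n i) → ℝ :=
  fun i j => k i j + 1

theorem gridPoint_pos (k : ∀ i, Fin (n i) → Fin (τ i + 1)) (i : Fin p) (j : Fin (n i)) :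
    0 < gridPoint k i j := by
  unfold gridPoint
  positivity

theorem mulVec_monoEvalMatrix_gridPoint_injective :
    Function.Injective (monoEvalMatrix (τ := τ) (gridPoint (n := n) (τ := τ))).mulVec := by
  classical
  suffices h0 : ∀ c, monoEvalMatrix gridPoint *ᵥ c = 0 → c = 0 from fun c c' h =>
    sub_eq_zero.1 (h0 _ (by rw [Matrix.mulVec_sub, h, sub_self]))
  intro c hc
  let S : (Σ i : Fin p, Fin (n i)) → Finset ℝ := fun q =>
    Finset.univ.image fun k : Fin (τ q.1 + 1) => (k : ℝ) + 1
  have hS (q : Σ i : Fin p, Fin (n i)) : #(S q) = τ q.1 + 1 := by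
    rw [Finset.card_image_of_injective _ fun a b h => Fin.ext (by simpa using h),
      Finset.card_univ, Fintype.card_fin]
  have hP : Lam.sumMonomial c = 0 := by
    refine eq_zero_of_eval_zero_at_prod_finset _ S
      (fun q => hS q ▸ Lam.degreeOf_sumMonomial_lt c q) fun x hx => ?_
    choose k hk using fun q => Finset.mem_image.1 (hx q)
    obtain rfl : x = fun q => gridPoint (fun i j => k ⟨i, j⟩) q.1 q.2 :=
      funext fun q => (hk q).2.symm
    have := congrFun hc fun i j => k ⟨i, j⟩
    rw [← evalAt, Lam.evalAt_sumMonomial]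
    simpa [Matrix.mulVec, dotProduct, monoEvalMatrix, mul_comm] using this
  funext β
  rw [← Lam.coeff_sumMonomial c β, hP, coeff_zero, Pi.zero_apply]

end

theorem dnn_strict_primal_feasibility_general (p : ℕ)
    (n : Fin p → ℕ) (hn : ∀ i, 1 ≤ n i) (τ : Fin p → ℕ) :
    ∃ y : Lam n (fun i => 2 * τ i) → ℝ,
      (∑ α : Lam n (fun i => 2 * τ i), (gPoly n τ).coeff α.toFinsupp * y α) = 1 ∧
      (momentMatrix y).PosDef ∧
      (∀ β γ : Lam n τ, 0 < momentMatrix y β γ) := by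
  set S := ∑ k, evalAt (gridPoint (n := n) (τ := τ) k) (gPoly n τ)
  have hS : 0 < S :=
    Finset.sum_pos (fun k _ => evalAt_gPoly_pos hn (gridPoint_pos k)) Finset.univ_nonempty
  refine ⟨S⁻¹ • pointMoments (gridPoint (τ := τ)), ?_, ?_, fun β γ => ?_⟩
  · simp only [Pi.smul_apply, smul_eq_mul, mul_left_comm _ S⁻¹, ← Finset.mul_sum,
      sum_coeff_mul_pointMoments gPoly_isMultiForm]
    exact inv_mul_cancel₀ hS.ne'
  · rw [momentMatrix_smul]
    exact (posDef_momentMatrix_pointMoments mulVec_monoEvalMatrix_gridPoint_injective).smul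
      (inv_pos.2 hS)
  · exact mul_pos (inv_pos.2 hS) (pointMoments_pos gridPoint_pos _)

/-- **Strict primal feasibility (Lemma 3.6).** There is a vector `y : Λ_{2τ} → ℝ` with
`Σ_α g_α y_α = 1` whose moment matrix is positive definite and entrywise strictly positive,
i.e. the DNN relaxation is strictly feasible. -/
theorem dnn_strict_primal_feasibility (p : ℕ) (hp : 1 ≤ p)
    (n : Fin p → ℕ) (hn : ∀ i, 1 ≤ n i) (τ : Fin p → ℕ) :
    ∃ y : Lam n (fun i => 2 * τ i) → ℝ,
      (∑ α : Lam n (fun i => 2 * τ i), (gPoly n τ).coeff α.toFinsupp * y α) = 1 ∧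
      (momentMatrix y).PosDef ∧
      (∀ β γ : Lam n τ, 0 < momentMatrix y β γ) :=
  dnn_strict_primal_feasibility_general p n hn τ
end

section
/- (Strict dual feasibility, Lemma 3.7.) Let τ = (τ₁,…,τ_p) ∈ ℕᵖ and let f be a multi-form of multidegree 2τ = (2τ₁,…,2τ_p). Then there exist γ ∈ ℝ, a positive definite symmetric matrix S and a symmetric matrix T with all entries strictly positive (both indexed by Λ_τ × Λ_τ) such that for all x ∈ ℝ^{n₁}×…×ℝ^{n_p}, f(x) − γ·g(x) = (x^[τ])ᵀ (S + T) (x^[τ]), where g(x) := ∏_{i=1}^p (Σ_{j=1}^{n_i} (x⁽ⁱ⁾_j)²)^{τ_i}. -/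
open MvPolynomial Finset

/-!
Every exponent of multidegree `2τ` splits as `β + γ` with `β, γ ∈ Λ_τ`, so `f` is a quadratic
form `(x^[τ])ᵀ A (x^[τ])` with `A` symmetric, and the multinomial theorem writes `g` as
`(x^[τ])ᵀ D (x^[τ])` with `D` diagonal with positive entries. With `J` the all-ones matrix,
`f - c g = (x^[τ])ᵀ ((A - J - c D) + J) (x^[τ])`, and `A - J - c D` is positive definite once
`-c` is large, since `v ᵀ B v ≥ -(∑ |Bᵢⱼ|) ‖v‖²` for every matrix `B`.
-/

open Matrix

section QuadraticForm

variable {ι : Type*} [Fintype ι]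

lemma Matrix.dotProduct_mulVec_self_eq_sum_sum {R : Type*} [CommSemiring R]
    (A : Matrix ι ι R) (v : ι → R) :
    v ⬝ᵥ (A *ᵥ v) = ∑ i, ∑ j, A i j * (v i * v j) := by
  simp only [dotProduct, mulVec, Finset.mul_sum]
  exact Finset.sum_congr rfl fun i _ => Finset.sum_congr rfl fun j _ => by ring

lemma Matrix.dotProduct_transpose_mulVec_self {R : Type*} [CommSemiring R]
    (A : Matrix ι ι R) (v : ι → R) : v ⬝ᵥ (Aᵀ *ᵥ v) = v ⬝ᵥ (A *ᵥ v) := by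
  rw [mulVec_transpose, dotProduct_comm, dotProduct_mulVec]

lemma Matrix.exists_isSymm_dotProduct_mulVec_self_eq {R : Type*} [Field R] [CharZero R]
    (A : Matrix ι ι R) :
    ∃ B : Matrix ι ι R, B.IsSymm ∧ ∀ v, v ⬝ᵥ (B *ᵥ v) = v ⬝ᵥ (A *ᵥ v) :=
  ⟨(2⁻¹ : R) • (A + Aᵀ), (isSymm_add_transpose_self A).smul _, fun v => by
    rw [smul_mulVec, add_mulVec, dotProduct_smul, dotProduct_add,
      dotProduct_transpose_mulVec_self, smul_eq_mul]
    ring⟩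

lemma Matrix.neg_sum_abs_mul_dotProduct_self_le (B : Matrix ι ι ℝ) (v : ι → ℝ) :
    -((∑ i, ∑ j, |B i j|) * (v ⬝ᵥ v)) ≤ v ⬝ᵥ (B *ᵥ v) := by
  have hv : ∀ i, v i * v i ≤ v ⬝ᵥ v := fun i =>
    Finset.single_le_sum (f := fun j => v j * v j) (fun j _ => mul_self_nonneg _)
      (Finset.mem_univ i)
  rw [dotProduct_mulVec_self_eq_sum_sum, Finset.sum_mul, ← Finset.sum_neg_distrib]
  refine Finset.sum_le_sum fun i _ => ?_
  rw [Finset.sum_mul, ← Finset.sum_neg_distrib]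
  refine Finset.sum_le_sum fun j _ => ?_
  have hij : |v i * v j| ≤ v ⬝ᵥ v := by
    rw [abs_mul]
    nlinarith [two_mul_le_add_sq |v i| |v j|, abs_mul_abs_self (v i), abs_mul_abs_self (v j),
      hv i, hv j]
  calc -(|B i j| * (v ⬝ᵥ v)) ≤ -(|B i j| * |v i * v j|) := by gcongr
    _ = -|B i j * (v i * v j)| := by rw [abs_mul (B i j)]
    _ ≤ B i j * (v i * v j) := neg_abs_le _

lemma Matrix.exists_posDef_add_smul_diagonal [DecidableEq ι] {B : Matrix ι ι ℝ} (hB : B.IsSymm)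
    {d : ι → ℝ} (hd : ∀ i, 0 < d i) : ∃ M : ℝ, (B + M • diagonal d).PosDef := by
  set K := ∑ i, ∑ j, |B i j|
  set M := (K + 1) * ∑ i, (d i)⁻¹
  have hMd : ∀ i, K + 1 ≤ M * d i := fun i => by
    have hK : 0 ≤ K := by positivity
    have : (d i)⁻¹ ≤ ∑ i, (d i)⁻¹ :=
      Finset.single_le_sum (f := fun i => (d i)⁻¹) (fun i _ => (inv_pos.2 (hd i)).le)
        (Finset.mem_univ i)
    calc K + 1 = (K + 1) * (d i)⁻¹ * d i := by field_simp [(hd i).ne']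
      _ ≤ M * d i := mul_le_mul_of_nonneg_right (mul_le_mul_of_nonneg_left this (by linarith))
          (hd i).le
  refine ⟨M, posDef_iff_dotProduct_mulVec.mpr ⟨?_, fun v hv => ?_⟩⟩
  · rw [isHermitian_iff_isSymm]
    exact hB.add ((isSymm_diagonal d).smul M)
  have hvv : 0 < v ⬝ᵥ v := by simpa using dotProduct_star_self_pos_iff.mpr hv
  have hdiag : (K + 1) * (v ⬝ᵥ v) ≤ M * (v ⬝ᵥ (diagonal d *ᵥ v)) := by
    simp only [dotProduct, mulVec_diagonal, Finset.mul_sum]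
    refine Finset.sum_le_sum fun i _ => ?_
    calc (K + 1) * (v i * v i) ≤ M * d i * (v i * v i) := by
          gcongr; exacts [mul_self_nonneg _, hMd i]
      _ = M * (v i * (d i * v i)) := by ring
  rw [star_trivial, add_mulVec, dotProduct_add, smul_mulVec, dotProduct_smul, smul_eq_mul]
  linarith [neg_sum_abs_mul_dotProduct_self_le B v]

end QuadraticForm

lemma exists_add_eq_of_sum_eq_add {N : Type*} [Fintype N] {u : N → ℕ} {s t : ℕ}
    (hu : ∑ j, u j = s + t) : ∃ b c : N → ℕ, b + c = u ∧ ∑ j, b j = s ∧ ∑ j, c j = t := by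
  obtain ⟨g, hgu, hg⟩ := Finsupp.exists_le_degree_eq (Finsupp.equivFunOnFinite.symm u) s
    (by simp [Finsupp.degree_eq_sum, hu])
  have hgu' : ∀ j, g j ≤ u j := fun j => by simpa using hgu j
  refine ⟨g, u - g, funext fun j => Nat.add_sub_cancel' (hgu' j), by
    rwa [Finsupp.degree_eq_sum] at hg, ?_⟩
  have := Finset.sum_congr rfl fun j (_ : j ∈ Finset.univ) => Nat.add_sub_cancel' (hgu' j)
  rw [Finset.sum_add_distrib, hu, ← Finsupp.degree_eq_sum, hg] at this
  simpa using this

section MultiForm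

variable {p : ℕ} {n τ : Fin p → ℕ}

/-- The vector `x^[τ]`. -/
noncomputable def monomialVec (τ : Fin p → ℕ) (x : ∀ i : Fin p, Fin (n i) → ℝ) :
    Lam n τ → ℝ :=
  fun β => β.mono x

lemma evalAt_add (x : ∀ i : Fin p, Fin (n i) → ℝ)
    (P Q : MvPolynomial (Σ i : Fin p, Fin (n i)) ℝ) :
    evalAt x (P + Q) = evalAt x P + evalAt x Q :=
  map_add _ P Q

lemma evalAt_mul (x : ∀ i : Fin p, Fin (n i) → ℝ)
    (P Q : MvPolynomial (Σ i : Fin p, Fin (n i)) ℝ) :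
    evalAt x (P * Q) = evalAt x P * evalAt x Q :=
  map_mul _ P Q

lemma evalAt_monomial (x : ∀ i : Fin p, Fin (n i) → ℝ) (m : (Σ i : Fin p, Fin (n i)) →₀ ℕ)
    (c : ℝ) : evalAt x (monomial m c) = c * ∏ i, ∏ j, x i j ^ m ⟨i, j⟩ := by
  rw [evalAt, eval_monomial, Finsupp.prod_fintype _ _ (fun _ => pow_zero _),
    ← Finset.univ_sigma_univ, Finset.prod_sigma]

lemma Lam.evalAt_monomial_toFinsupp (β : Lam n τ) (c : ℝ) (x : ∀ i : Fin p, Fin (n i) → ℝ) :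
    evalAt x (monomial β.toFinsupp c) = c * β.mono x :=
  evalAt_monomial x _ c

lemma Lam.exists_toFinsupp_add_eq {m : (Σ i : Fin p, Fin (n i)) →₀ ℕ}
    (hm : ∀ i, ∑ j, m ⟨i, j⟩ = 2 * τ i) : ∃ β γ : Lam n τ, β.toFinsupp + γ.toFinsupp = m := by
  choose b c hbc hb hc using fun i =>
    exists_add_eq_of_sum_eq_add (u := fun j => m ⟨i, j⟩) ((hm i).trans (two_mul (τ i)))
  refine ⟨⟨b, hb⟩, ⟨c, hc⟩, ?_⟩
  ext ⟨i, j⟩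
  simpa [Lam.toFinsupp] using congrFun (hbc i) j

theorem IsMultiForm.exists_eq_dotProduct_mulVec {f : MvPolynomial (Σ i : Fin p, Fin (n i)) ℝ}
    (hf : IsMultiForm f (fun i => 2 * τ i)) :
    ∃ A : Matrix (Lam n τ) (Lam n τ) ℝ,
      ∀ x, evalAt x f = monomialVec τ x ⬝ᵥ (A *ᵥ monomialVec τ x) := by
  classical
  rw [← f.support_sum_monomial_coeff]
  refine Finset.sum_induction _ (fun P => ∃ A : Matrix (Lam n τ) (Lam n τ) ℝ,
    ∀ x, evalAt x P = monomialVec τ x ⬝ᵥ (A *ᵥ monomialVec τ x)) ?_ ⟨0, fun x => by simp [evalAt]⟩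
    fun m hm => ?_
  · rintro P Q ⟨A, hA⟩ ⟨B, hB⟩
    refine ⟨A + B, fun x => ?_⟩
    rw [add_mulVec, dotProduct_add, ← hA, ← hB, evalAt_add]
  · obtain ⟨β, γ, rfl⟩ := Lam.exists_toFinsupp_add_eq (hf _ hm)
    set c := f.coeff (β.toFinsupp + γ.toFinsupp)
    refine ⟨single β γ c, fun x => ?_⟩
    rw [← mul_one c, ← monomial_mul, evalAt_mul, Lam.evalAt_monomial_toFinsupp,
      Lam.evalAt_monomial_toFinsupp, single_mulVec, ← Pi.single, dotProduct_single]
    simp only [monomialVec]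
    ring

lemma Lam.sum_eq_sum_piFinset {M : Type*} [AddCommMonoid M] (F : (∀ i, Fin (n i) → ℕ) → M) :
    ∑ β : Lam n τ, F β.1 = ∑ k ∈ Fintype.piFinset fun i => piAntidiag univ (τ i), F k := by
  refine Finset.sum_bij (fun β _ => β.1) (fun β _ => ?_) (fun β _ γ _ h => Subtype.ext h)
    (fun k hk => ?_) (fun _ _ => rfl)
  · simpa [Fintype.mem_piFinset] using β.2
  · exact ⟨⟨k, by simpa [Fintype.mem_piFinset] using hk⟩, Finset.mem_univ _, rfl⟩

lemma evalAt_gPoly_s4 [DecidableEq (Lam n τ)] (x : ∀ i : Fin p, Fin (n i) → ℝ) :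
    evalAt x (gPoly n τ) = monomialVec τ x ⬝ᵥ
      (diagonal (fun β : Lam n τ => ∏ i, (Nat.multinomial univ (β.1 i) : ℝ)) *ᵥ
        monomialVec τ x) := by
  calc evalAt x (gPoly n τ) = ∏ i, (∑ j, x i j ^ 2) ^ τ i := by simp [evalAt, gPoly]
    _ = ∏ i, ∑ k ∈ piAntidiag univ (τ i),
          (Nat.multinomial univ k : ℝ) * ∏ j, (x i j ^ 2) ^ k j := by
        simp_rw [Finset.sum_pow_eq_sum_piAntidiag]
    _ = ∑ k ∈ Fintype.piFinset fun i => piAntidiag univ (τ i),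
          ∏ i, ((Nat.multinomial univ (k i) : ℝ) * ∏ j, (x i j ^ 2) ^ k i j) :=
        Finset.prod_univ_sum _ _
    _ = ∑ β : Lam n τ, (∏ i, (Nat.multinomial univ (β.1 i) : ℝ)) * β.mono x ^ 2 := by
        rw [← Lam.sum_eq_sum_piFinset]
        refine Finset.sum_congr rfl fun β _ => ?_
        simp only [Finset.prod_mul_distrib, Lam.mono, ← Finset.prod_pow, ← pow_mul, mul_comm]
    _ = _ := by
        simp only [dotProduct, mulVec_diagonal, monomialVec]
        exact Finset.sum_congr rfl fun β _ => by ring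

end MultiForm

theorem dnn_strict_dual_feasibility_general (p : ℕ)
    (n : Fin p → ℕ) (τ : Fin p → ℕ)
    (f : MvPolynomial (Σ i : Fin p, Fin (n i)) ℝ)
    (hf : IsMultiForm f (fun i => 2 * τ i)) :
    ∃ (c : ℝ) (S T : Matrix (Lam n τ) (Lam n τ) ℝ),
      S.PosDef ∧ T.IsSymm ∧ (∀ β γ : Lam n τ, 0 < T β γ) ∧
      ∀ x : ∀ i : Fin p, Fin (n i) → ℝ,
        evalAt x f - c * evalAt x (gPoly n τ) =
          ∑ β : Lam n τ, ∑ γ : Lam n τ, (S + T) β γ * (Lam.mono β x * Lam.mono γ x) := by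
  classical
  obtain ⟨A₀, hfA₀⟩ := hf.exists_eq_dotProduct_mulVec
  obtain ⟨A, hA, hAA₀⟩ := exists_isSymm_dotProduct_mulVec_self_eq A₀
  set J : Matrix (Lam n τ) (Lam n τ) ℝ := of fun _ _ => 1
  have hJ : J.IsSymm := IsSymm.ext fun _ _ => rfl
  obtain ⟨M, hM⟩ := exists_posDef_add_smul_diagonal (hA.sub hJ)
    (d := fun β : Lam n τ => ∏ i, (Nat.multinomial univ (β.1 i) : ℝ))
    fun β => Finset.prod_pos fun i _ => Nat.cast_pos.mpr (Nat.multinomial_pos _ _)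
  refine ⟨-M, A - J + M • diagonal _, J, hM, hJ, fun _ _ => one_pos, fun x => ?_⟩
  rw [hfA₀, ← hAA₀, evalAt_gPoly_s4]
  refine Eq.trans ?_ (dotProduct_mulVec_self_eq_sum_sum _ (monomialVec τ x))
  simp only [add_mulVec, sub_mulVec, smul_mulVec, dotProduct_add, dotProduct_sub,
    dotProduct_smul, smul_eq_mul]
  ring

/-- **Strict dual feasibility (Lemma 3.7).** For any multi-form `f` of multidegree `2τ` there
are `c ∈ ℝ`, a positive definite symmetric matrix `S` and a symmetric entrywise strictly
positive matrix `T`, indexed by `Λ_τ`, with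
`f(x) - c·g(x) = (x^[τ])ᵀ (S + T) (x^[τ])` for all `x`. -/
theorem dnn_strict_dual_feasibility (p : ℕ) (hp : 1 ≤ p)
    (n : Fin p → ℕ) (hn : ∀ i, 1 ≤ n i) (τ : Fin p → ℕ)
    (f : MvPolynomial (Σ i : Fin p, Fin (n i)) ℝ)
    (hf : IsMultiForm f (fun i => 2 * τ i)) :
    ∃ (c : ℝ) (S T : Matrix (Lam n τ) (Lam n τ) ℝ),
      S.PosDef ∧ T.IsSymm ∧ (∀ β γ : Lam n τ, 0 < T β γ) ∧
      ∀ x : ∀ i : Fin p, Fin (n i) → ℝ,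
        evalAt x f - c * evalAt x (gPoly n τ) =
          ∑ β : Lam n τ, ∑ γ : Lam n τ, (S + T) β γ * (Lam.mono β x * Lam.mono γ x) :=
  dnn_strict_dual_feasibility_general p n τ f hf
end
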